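/- arXiv:2104.03690 — 2 statements merged into one kernel-verified Lean document; each statement's English description precedes it below -/
import Mathlib

section
/- For every timed language L over a finite alphabet Σ, the family of sets { fract(S) : S is a finite subset of ℝ≥0 and L is S-invariant }, if nonempty, has a least element with respect to set inclusion. -/
/-- A timed automorphism: a strictly monotone bijection `ℝ → ℝ`
preserving integer differences, i.e. `f (t + 1) = f t + 1`. -/
def IsTimedAut (f : ℝ → ℝ) : Prop :=
  Function.Bijective f ∧ StrictMono f ∧ ∀ t : ℝ, f (t + 1) = f t + 1

/-- A timed word over alphabet `Γ`: a finite sequence of letters with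
nonnegative, monotonically nondecreasing timestamps. -/
def IsTimedWord {Γ : Type*} (w : List (Γ × ℝ)) : Prop :=
  (∀ p ∈ w, 0 ≤ p.2) ∧ w.Chain' (fun p q => p.2 ≤ q.2)

/-- Pointwise action of a function `f : ℝ → ℝ` on a timed word. -/
def actWord {Γ : Type*} (f : ℝ → ℝ) (w : List (Γ × ℝ)) : List (Γ × ℝ) :=
  w.map (fun p => (p.1, f p.2))

/-- A timed language `L` is `S`-invariant if for every `S`-timed automorphism
`π` and every timed word `w` such that `π(w)` is again a timed word,
`w ∈ L ↔ π(w) ∈ L`. -/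
def SInvariant {Γ : Type*} (S : Set ℝ) (L : Set (List (Γ × ℝ))) : Prop :=
  ∀ f : ℝ → ℝ, IsTimedAut f → (∀ t ∈ S, f t = t) →
    ∀ w : List (Γ × ℝ), IsTimedWord w → IsTimedWord (actWord f w) →
      (w ∈ L ↔ actWord f w ∈ L)

/-- The family `{ fract S : S ⊆ ℝ≥0 finite, L is S-invariant }`. -/
def FractSupports {Γ : Type*} (L : Set (List (Γ × ℝ))) : Set (Set ℝ) :=
  {T | ∃ S : Set ℝ, S.Finite ∧ (∀ t ∈ S, 0 ≤ t) ∧ SInvariant S L ∧ T = Int.fract '' S}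

/-!
Let `A, B ⊆ [0, 1)` be finite and `L` both `A`- and `B`-invariant; we show that `L` is
`(A ∩ B)`-invariant. As `S`-invariance only depends on `fract S`, the fract-supports of `L` are
then closed under intersection, so one of least cardinality is the least one.

Given an `(A ∩ B)`-timed automorphism `f`, follow the straight-line isotopy `x + s (f x - x)`
from the identity to `f`. For a fine subdivision, consecutive stages differ by an
`(A ∩ B)`-automorphism `g` moving every point by less than `ε`, where the classes mod 1 of
`A ∪ B ∪ {0}` are `2ε`-separated. Composing tent-shaped bumps around the classes of `A \ B` gives
an automorphism `H` that fixes `B` and agrees with `g` on `A`, so `g = H ∘ u` with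
`u = H⁻¹ ∘ g` fixing `A`. Because `0` is among the separated classes, `H 0` is `0` or `g 0`,
which keeps the intermediate word `u w` nonnegative.
-/
open Set Function Filter Topology

local notation "𝕋" => UnitAddCircle

namespace IsTimedAut

variable {f g : ℝ → ℝ}

theorem of_continuous (hc : Continuous f) (hm : StrictMono f) (h1 : ∀ t, f (t + 1) = f t + 1) :
    IsTimedAut f :=
  ⟨⟨hm.injective, (CircleDeg1Lift.continuous_iff_surjective ⟨⟨f, hm.monotone⟩, h1⟩).1 hc⟩, hm, h1⟩

theorem id : IsTimedAut id := ⟨bijective_id, strictMono_id, fun _ => rfl⟩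

theorem comp (hf : IsTimedAut f) (hg : IsTimedAut g) : IsTimedAut (f ∘ g) :=
  ⟨hf.1.comp hg.1, hf.2.1.comp hg.2.1, fun t => by simp only [comp_apply, hg.2.2, hf.2.2]⟩

theorem invFun (hf : IsTimedAut f) : IsTimedAut (Function.invFun f) := by
  have hri : RightInverse (Function.invFun f) f := rightInverse_invFun hf.1.2
  refine ⟨⟨hri.injective, (leftInverse_invFun hf.1.1).surjective⟩, fun a b hab => ?_, fun t => ?_⟩
  · exact hf.2.1.lt_iff_lt.mp (by rwa [hri a, hri b])
  · exact hf.1.1 (by rw [hri, hf.2.2, hri])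

theorem map_add_int (hf : IsTimedAut f) (x : ℝ) (n : ℤ) : f (x + n) = f x + n :=
  (⟨⟨f, hf.2.1.monotone⟩, hf.2.2⟩ : CircleDeg1Lift).map_add_int x n

theorem continuous (hf : IsTimedAut f) : Continuous f :=
  hf.2.1.monotone.continuous_of_surjective hf.1.2

theorem exists_abs_sub_le (hf : IsTimedAut f) : ∃ M, ∀ x, |f x - x| ≤ M := by
  have hper : Periodic (fun x => f x - x) 1 := fun x => by simp only [hf.2.2]; ring
  obtain ⟨M, hM⟩ := isBounded_iff_forall_norm_le.1
    (hper.isBounded_of_continuous one_ne_zero (hf.continuous.sub continuous_id))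
  exact ⟨M, fun x => hM _ (mem_range_self x)⟩

end IsTimedAut

section

variable {Γ : Type*} {L : Set (List (Γ × ℝ))}

theorem actWord_comp (f g : ℝ → ℝ) (w : List (Γ × ℝ)) :
    actWord f (actWord g w) = actWord (f ∘ g) w := by
  simp [actWord, Function.comp_def]

theorem isTimedWord_actWord {f : ℝ → ℝ} {w : List (Γ × ℝ)} (hw : IsTimedWord w)
    (hf : Monotone f) (h0 : ∀ p ∈ w, 0 ≤ f p.2) : IsTimedWord (actWord f w) := by
  refine ⟨fun p hp => ?_, List.isChain_map_of_isChain (S := fun p q : Γ × ℝ => p.2 ≤ q.2) _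
    (fun _ _ h => hf h) hw.2⟩
  obtain ⟨q, hq, rfl⟩ := List.mem_map.mp hp
  exact h0 q hq

theorem IsTimedWord.nonneg_of_actWord {f : ℝ → ℝ} {w : List (Γ × ℝ)}
    (hfw : IsTimedWord (actWord f w)) (p : Γ × ℝ) (hp : p ∈ w) : 0 ≤ f p.2 :=
  hfw.1 (p.1, f p.2) (List.mem_map_of_mem hp)

theorem SInvariant.fract_image {S : Set ℝ} (h : SInvariant S L) :
    SInvariant (Int.fract '' S) L := by
  refine fun f hf hfix => h f hf fun t ht => ?_
  have := hf.map_add_int (Int.fract t) ⌊t⌋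
  rwa [hfix _ (mem_image_of_mem _ ht), Int.fract_add_floor] at this

theorem dist_coe_le_abs_sub (x y : ℝ) : dist (x : 𝕋) (y : 𝕋) ≤ |x - y| := by
  simpa [dist_eq_norm] using
    QuotientAddGroup.norm_mk_le_norm (S := AddSubgroup.zmultiples (1 : ℝ)) (m := x - y)

theorem isTimedAut_add_mul {φ : ℝ → ℝ} {c : ℝ} (hφ : LipschitzWith 1 φ) (hper : Periodic φ 1)
    (hc : |c| < 1) : IsTimedAut fun x => x + c * φ x := by
  refine .of_continuous (continuous_id.add (continuous_const.mul hφ.continuous))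
    (fun x y hxy => ?_) fun t => by rw [hper]; ring
  have h1 : |φ y - φ x| ≤ y - x := by
    simpa [Real.dist_eq, abs_of_pos (sub_pos.2 hxy)] using hφ.dist_le_mul y x
  have h2 : |c * (φ y - φ x)| < y - x := by
    rw [abs_mul]
    calc |c| * |φ y - φ x| ≤ |c| * (y - x) := by gcongr
      _ < y - x := mul_lt_of_lt_one_left (sub_pos.2 hxy) hc
  linarith [neg_abs_le (c * (φ y - φ x))]

-- `dist (x : 𝕋) a` is the distance from `x` to `a + ℤ`.
noncomputable def tent (a ε x : ℝ) : ℝ := max (ε - dist (x : 𝕋) a) 0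

theorem lipschitzWith_tent (a ε : ℝ) : LipschitzWith 1 (tent a ε) := by
  refine LipschitzWith.of_dist_le_mul fun x y => ?_
  calc |tent a ε x - tent a ε y| ≤ |dist (y : 𝕋) a - dist (x : 𝕋) a| :=
        (abs_max_sub_max_le_abs _ _ 0).trans_eq (by congr 1; ring)
    _ ≤ dist (y : 𝕋) x := abs_dist_sub_le _ _ _
    _ ≤ |y - x| := dist_coe_le_abs_sub y x
    _ = 1 * dist x y := by rw [one_mul, Real.dist_eq, abs_sub_comm]

theorem periodic_tent (a ε : ℝ) : Periodic (tent a ε) 1 := fun x => by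
  simp [tent]

theorem tent_self {a ε : ℝ} (hε : 0 ≤ ε) : tent a ε a = ε := by simp [tent, hε]

theorem tent_eq_zero {a ε x : ℝ} (h : ε ≤ dist (x : 𝕋) a) : tent a ε x = 0 := by
  simp [tent, h]

theorem exists_isTimedAut_map_eq {a b ε : ℝ} (hε : 0 < ε) (hab : |b - a| < ε) :
    ∃ h, IsTimedAut h ∧ h a = b ∧ ∀ x : ℝ, ε ≤ dist (x : 𝕋) a → h x = x := by
  refine ⟨fun x => x + (b - a) / ε * tent a ε x,
    isTimedAut_add_mul (lipschitzWith_tent a ε) (periodic_tent a ε) ?_, ?_, fun x hx => ?_⟩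
  · rwa [abs_div, abs_of_pos hε, div_lt_one hε]
  · simp only [tent_self hε.le]; rw [div_mul_cancel₀ _ hε.ne']; ring
  · simp [tent_eq_zero hx]

theorem exists_isTimedAut_eqOn_of_pairwise {ε : ℝ} (hε : 0 < ε) (g : ℝ → ℝ) (s : Finset ℝ)
    (hsep : (s : Set ℝ).Pairwise fun a b => 2 * ε ≤ dist (a : 𝕋) b)
    (hg : ∀ a ∈ s, |g a - a| < ε) :
    ∃ H, IsTimedAut H ∧ (∀ a ∈ s, H a = g a) ∧
      ∀ x : ℝ, (∀ a ∈ s, ε ≤ dist (x : 𝕋) a) → H x = x := by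
  classical
  induction s using Finset.induction_on with
  | empty => exact ⟨id, .id, by simp, fun _ _ => rfl⟩
  | insert a s has ih =>
    rw [Finset.coe_insert, Set.pairwise_insert_of_notMem (by exact_mod_cast has)] at hsep
    simp only [Finset.mem_insert, forall_eq_or_imp] at hg ⊢
    obtain ⟨H, hH, hHs, hHfix⟩ := ih hsep.1 hg.2
    obtain ⟨h, hh, hha, hhfix⟩ := exists_isTimedAut_map_eq hε hg.1
    have far_a : ∀ b ∈ s, ε ≤ dist (b : 𝕋) a := fun b hb => by linarith [(hsep.2 b hb).2]
    refine ⟨h ∘ H, hh.comp hH, ⟨?_, fun b hb => ?_⟩, fun x hx => ?_⟩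
    · rw [comp_apply, hHfix a fun b hb => by rw [dist_comm]; exact far_a b hb, hha]
    · -- `g b` is within `ε` of `b`, which is `2ε`-far from `a`
      rw [comp_apply, hHs b hb, hhfix]
      linarith [(hsep.2 b hb).2, dist_triangle (b : 𝕋) (g b : 𝕋) a, dist_coe_le_abs_sub b (g b),
        abs_sub_comm b (g b), hg.2 b hb]
    · rw [comp_apply, hHfix x hx.2, hhfix x hx.1]

theorem Set.Finite.exists_pos_pairwise_le_dist {X : Type*} [MetricSpace X] {P : Set X}
    (hP : P.Finite) : ∃ ε > 0, P.Pairwise fun a b => ε ≤ dist a b := by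
  have : ∀ᶠ ε in 𝓝[>] (0 : ℝ), ∀ a ∈ P, ∀ b ∈ P, a ≠ b → ε ≤ dist a b := by
    refine hP.eventually_all.2 fun a _ => hP.eventually_all.2 fun b _ => ?_
    by_cases hab : a = b
    · exact .of_forall fun _ h => absurd hab h
    · filter_upwards [nhdsWithin_le_nhds (ge_mem_nhds (dist_pos.2 hab))] with ε hε _ using hε
  obtain ⟨ε, hε, hP⟩ := (this.and self_mem_nhdsWithin).exists
  exact ⟨ε, hP, hε⟩

theorem exists_pos_pairwise_le_dist_coe {P : Set ℝ} (hP : P.Finite) (hP1 : P ⊆ Ico 0 1) :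
    ∃ ε > 0, P.Pairwise fun a b => ε ≤ dist (a : 𝕋) b := by
  have hinj : P.InjOn ((↑) : ℝ → 𝕋) := fun a ha b hb hab =>
    (AddCircle.coe_eq_coe_iff_of_mem_Ico (a := 0) (by simpa using hP1 ha)
      (by simpa using hP1 hb)).1 hab
  obtain ⟨ε, hε, hsep⟩ := (hP.image ((↑) : ℝ → 𝕋)).exists_pos_pairwise_le_dist
  exact ⟨ε, hε, hinj.pairwise_image.1 hsep⟩

noncomputable def isotopy (f : ℝ → ℝ) (s x : ℝ) : ℝ := x + s * (f x - x)

theorem IsTimedAut.isotopy {f : ℝ → ℝ} (hf : IsTimedAut f) {s : ℝ} (h0 : 0 ≤ s) (h1 : s ≤ 1) :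
    IsTimedAut (isotopy f s) := by
  have := hf.continuous
  refine .of_continuous (by unfold _root_.isotopy; fun_prop) (fun x y hxy => ?_)
    fun t => by simp only [_root_.isotopy, hf.2.2]; ring
  have hf' := hf.2.1 hxy
  unfold _root_.isotopy
  rcases h1.lt_or_eq with h1 | rfl
  · nlinarith
  · linarith

theorem isotopy_one (f : ℝ → ℝ) : isotopy f 1 = f := funext fun x => by simp [isotopy]

theorem isotopy_nonneg {f : ℝ → ℝ} {s x : ℝ} (h0 : 0 ≤ s) (h1 : s ≤ 1) (hx : 0 ≤ x)
    (hfx : 0 ≤ f x) : 0 ≤ isotopy f s x := by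
  unfold isotopy; nlinarith

section Intersection

variable {A B : Set ℝ} {ε : ℝ}

theorem exists_isTimedAut_fixing_eqOn (hA : A.Finite) (hε : 0 < ε)
    (hsep : (A ∪ B ∪ {0}).Pairwise fun a b => 2 * ε ≤ dist (a : 𝕋) b)
    {g : ℝ → ℝ} (hgfix : ∀ t ∈ A ∩ B, g t = t) (hclose : ∀ x, |g x - x| < ε) :
    ∃ H, IsTimedAut H ∧ (∀ b ∈ B, H b = b) ∧ (∀ a ∈ A, H a = g a) ∧ (H 0 = 0 ∨ H 0 = g 0) := by
  have hsub : A \ B ⊆ A ∪ B ∪ {0} := fun a ha => Or.inl (Or.inl ha.1)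
  obtain ⟨H, hH, hHg, hHfix⟩ := exists_isTimedAut_eqOn_of_pairwise hε g
    (hA.sdiff (t := B)).toFinset (by simpa using hsep.mono hsub) fun a _ => hclose a
  have hHg' : ∀ a ∈ A \ B, H a = g a := fun a ha => hHg a (by simpa using ha)
  have hHfix' : ∀ x ∈ A ∪ B ∪ {0}, x ∉ A \ B → H x = x := fun x hx hxAB =>
    hHfix x fun a ha => by
      have ha : a ∈ A \ B := by simpa using ha
      linarith [hsep hx (hsub ha) fun h => hxAB (h ▸ ha)]
  refine ⟨H, hH, fun b hb => hHfix' b (Or.inl (Or.inr hb)) fun h => h.2 hb, fun a ha => ?_, ?_⟩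
  · by_cases hb : a ∈ B
    · rw [hHfix' a (Or.inl (Or.inl ha)) fun h => h.2 hb, hgfix a ⟨ha, hb⟩]
    · exact hHg' a ⟨ha, hb⟩
  · by_cases h0 : (0 : ℝ) ∈ A \ B
    · exact .inr (hHg' 0 h0)
    · exact .inl (hHfix' 0 (Or.inr rfl) h0)

theorem SInvariant.mem_iff_of_abs_sub_lt (hLA : SInvariant A L) (hLB : SInvariant B L)
    (hA : A.Finite) (hε : 0 < ε)
    (hsep : (A ∪ B ∪ {0}).Pairwise fun a b => 2 * ε ≤ dist (a : 𝕋) b)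
    {g : ℝ → ℝ} (hg : IsTimedAut g) (hgfix : ∀ t ∈ A ∩ B, g t = t) (hclose : ∀ x, |g x - x| < ε)
    {w : List (Γ × ℝ)} (hw : IsTimedWord w) (hgw : IsTimedWord (actWord g w)) :
    w ∈ L ↔ actWord g w ∈ L := by
  obtain ⟨H, hH, hHB, hHA, hH0⟩ := exists_isTimedAut_fixing_eqOn hA hε hsep hgfix hclose
  set u := invFun H ∘ g
  have hHu : ∀ x, H (u x) = g x := fun x => rightInverse_invFun hH.1.2 (g x)
  have hu : IsTimedAut u := hH.invFun.comp hg
  have hHuw : actWord H (actWord u w) = actWord g w := by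
    rw [actWord_comp]; exact congrArg (actWord · w) (funext hHu)
  have huw : IsTimedWord (actWord u w) := by
    refine isTimedWord_actWord hw hu.2.1.monotone fun p hp => hH.2.1.le_iff_le.1 ?_
    rw [hHu]
    rcases hH0 with h | h
    · rw [h]; exact hgw.nonneg_of_actWord p hp
    · rw [h]; exact hg.2.1.monotone (hw.1 p hp)
  calc w ∈ L ↔ actWord u w ∈ L := hLA u hu (fun a ha => hH.1.1 (by rw [hHu, hHA a ha])) w hw huw
    _ ↔ actWord g w ∈ L := hHuw ▸ hLB H hH hHB _ huw (hHuw ▸ hgw)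

theorem SInvariant.actWord_mem_iff_of_abs_sub_lt (hLA : SInvariant A L) (hLB : SInvariant B L)
    (hA : A.Finite) (hε : 0 < ε)
    (hsep : (A ∪ B ∪ {0}).Pairwise fun a b => 2 * ε ≤ dist (a : 𝕋) b)
    {φ ψ : ℝ → ℝ} (hφ : IsTimedAut φ) (hψ : IsTimedAut ψ) (hφfix : ∀ t ∈ A ∩ B, φ t = t)
    (hψfix : ∀ t ∈ A ∩ B, ψ t = t) (hclose : ∀ x, |ψ x - φ x| < ε) {w : List (Γ × ℝ)}
    (hφw : IsTimedWord (actWord φ w)) (hψw : IsTimedWord (actWord ψ w)) :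
    actWord φ w ∈ L ↔ actWord ψ w ∈ L := by
  have hφφ : ∀ y, φ (invFun φ y) = y := rightInverse_invFun hφ.1.2
  have hg : actWord (ψ ∘ invFun φ) (actWord φ w) = actWord ψ w := by
    rw [actWord_comp]
    exact congrArg (actWord · w) (funext fun x => congrArg ψ (leftInverse_invFun hφ.1.1 x))
  refine hg ▸ hLA.mem_iff_of_abs_sub_lt hLB hA hε hsep (hψ.comp hφ.invFun) (fun t ht => ?_)
    (fun y => ?_) hφw (hg ▸ hψw)
  · rw [comp_apply, hφ.1.1 ((hφφ t).trans (hφfix t ht).symm), hψfix t ht]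
  · simpa only [comp_apply, hφφ] using hclose (invFun φ y)

theorem SInvariant.inter (hA : A.Finite) (hB : B.Finite) (hA1 : A ⊆ Ico 0 1) (hB1 : B ⊆ Ico 0 1)
    (hLA : SInvariant A L) (hLB : SInvariant B L) : SInvariant (A ∩ B) L := by
  obtain ⟨δ, hδ, hsep⟩ := exists_pos_pairwise_le_dist_coe
    ((hA.union hB).union (finite_singleton 0)) (union_subset (union_subset hA1 hB1) (by simp))
  intro f hf hfix w hw hfw
  obtain ⟨M, hM⟩ := hf.exists_abs_sub_le
  obtain ⟨N, hN⟩ := exists_nat_gt (M / (δ / 2))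
  have hN0 : (0 : ℝ) < N := (div_nonneg ((abs_nonneg _).trans (hM 0)) (by positivity)).trans_lt hN
  have hstage : ∀ k ≤ N, IsTimedAut (isotopy f (k / N)) ∧ (∀ t ∈ A ∩ B, isotopy f (k / N) t = t) ∧
      IsTimedWord (actWord (isotopy f (k / N)) w) := fun k hk => by
    have h0 : (0 : ℝ) ≤ k / N := by positivity
    have h1 : (k : ℝ) / N ≤ 1 := (div_le_one hN0).2 (by exact_mod_cast hk)
    refine ⟨hf.isotopy h0 h1, fun t ht => by simp [isotopy, hfix t ht], isTimedWord_actWord hw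
      (hf.isotopy h0 h1).2.1.monotone fun p hp => isotopy_nonneg h0 h1 (hw.1 p hp)
        (hfw.nonneg_of_actWord p hp)⟩
  have key : ∀ k ≤ N, (w ∈ L ↔ actWord (isotopy f (k / N)) w ∈ L) := by
    intro k hk
    induction k with
    | zero => simp [isotopy, actWord]
    | succ k ih =>
      obtain ⟨hφ, hφfix, hφw⟩ := hstage k (by omega)
      obtain ⟨hψ, hψfix, hψw⟩ := hstage (k + 1) hk
      refine (ih (by omega)).trans (hLA.actWord_mem_iff_of_abs_sub_lt hLB hA (half_pos hδ)
        (hsep.mono' fun a b h => by linarith) hφ hψ hφfix hψfix (fun x => ?_) hφw hψw)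
      calc |isotopy f ((k + 1 : ℕ) / N) x - isotopy f (k / N) x| = |(f x - x) / N| := by
            simp only [isotopy]; push_cast; ring_nf
        _ ≤ M / N := by rw [abs_div, abs_of_pos hN0]; gcongr; exact hM x
        _ < δ / 2 := by rwa [div_lt_iff₀ hN0, mul_comm, ← div_lt_iff₀ (half_pos hδ)]
  simpa only [div_self hN0.ne', isotopy_one] using key N le_rfl

end Intersection

theorem mem_fractSupports_iff {T : Set ℝ} :
    T ∈ FractSupports L ↔ T.Finite ∧ T ⊆ Ico 0 1 ∧ SInvariant T L := by
  constructor
  · rintro ⟨S, hS, -, hSL, rfl⟩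
    exact ⟨hS.image _, image_subset_iff.2 fun t _ => ⟨Int.fract_nonneg t, Int.fract_lt_one t⟩,
      hSL.fract_image⟩
  · rintro ⟨hT, hT1, hTL⟩
    refine ⟨T, hT, fun t ht => (hT1 ht).1, hTL, ?_⟩
    rw [image_congr fun t ht => Int.fract_eq_self.2 (hT1 ht), image_id']

theorem inter_mem_fractSupports {T T' : Set ℝ} (hT : T ∈ FractSupports L)
    (hT' : T' ∈ FractSupports L) : T ∩ T' ∈ FractSupports L := by
  obtain ⟨hfin, h1, hL⟩ := mem_fractSupports_iff.1 hT
  obtain ⟨hfin', h1', hL'⟩ := mem_fractSupports_iff.1 hT'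
  exact mem_fractSupports_iff.2
    ⟨hfin.inter_of_left T', inter_subset_left.trans h1, hL.inter hfin hfin' h1 h1' hL'⟩

end

theorem exists_isLeast_of_inter_mem {α : Type*} {F : Set (Set α)} (hne : F.Nonempty)
    (hfin : ∀ s ∈ F, s.Finite) (hinter : ∀ s ∈ F, ∀ t ∈ F, s ∩ t ∈ F) : ∃ s, IsLeast F s := by
  obtain ⟨s, hs, hmin⟩ := (InvImage.wf ncard wellFounded_lt).has_min F hne
  refine ⟨s, hs, fun t ht => inter_eq_left.1 ?_⟩
  exact eq_of_subset_of_ncard_le inter_subset_left (not_lt.1 (hmin _ (hinter s hs t ht)))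
    (hfin s hs)

theorem exists_least_fract_support_general {Γ : Type*}
    (L : Set (List (Γ × ℝ)))
    (hne : (FractSupports L).Nonempty) :
    ∃ T ∈ FractSupports L, ∀ T' ∈ FractSupports L, T ⊆ T' := by
  obtain ⟨T, hT, hleast⟩ := exists_isLeast_of_inter_mem hne
    (fun T hT => (mem_fractSupports_iff.1 hT).1) fun _ hT _ hT' => inter_mem_fractSupports hT hT'
  exact ⟨T, hT, fun _ hT' => hleast hT'⟩

/-- the family `{ fract S : S finite ⊆ ℝ≥0, L S-invariant }`,
if nonempty, has a least element with respect to inclusion. -/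
theorem exists_least_fract_support {Γ : Type*} [Fintype Γ]
    (L : Set (List (Γ × ℝ))) (hL : ∀ w ∈ L, IsTimedWord w)
    (hne : (FractSupports L).Nonempty) :
    ∃ T ∈ FractSupports L, ∀ T' ∈ FractSupports L, T ⊆ T' :=
  exists_least_fract_support_general L hne
end

section
/- Let F, F' ⊆ [0,1) be finite sets and let G be a subgroup of the group Π of timed automorphisms. If Π_F ⊆ G and Π_{F'} ⊆ G, then Π_{F ∩ F'} ⊆ G. -/
/-- A permutation of `ℝ` is a timed automorphism if it is strictly monotone
and preserves integer differences: `π (t + 1) = π t + 1`. -/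
def IsTimedAutPerm (π : Equiv.Perm ℝ) : Prop :=
  StrictMono π ∧ ∀ t : ℝ, π (t + 1) = π t + 1

/-- `Π_S`: the set of `S`-timed automorphisms (as permutations of `ℝ`). -/
def TimedAutFixing (S : Set ℝ) : Set (Equiv.Perm ℝ) :=
  {π | IsTimedAutPerm π ∧ ∀ t ∈ S, π t = t}

/-! For finite nonempty `S`, the group `Π_S` acts transitively on each cell of `ℝ ∖ (S + ℤ)`:
on one gap between consecutive points of `S + ℤ` a fractional linear map moves any point to any
other, and extending it with period `1` gives an element of `Π_S`.

By induction on `F \ F'` and `F' \ F`, it suffices to show that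
`Π_B ≤ G` whenever `Π_{B ∪ {p}} ≤ G` and `Π_{B ∪ {q}} ≤ G`, where `p`, `q` and the points of
`B` lie in distinct `ℤ`-orbits. For `π ∈ Π_B`, the point `π⁻¹ q` lies in the cell of `q`, so
composing a move fixing `q` with a move fixing `p` gives `g ∈ G ∩ Π_B` with `g (π⁻¹ q) = q`;
then `π g⁻¹` fixes `B ∪ {q}`, hence `π ∈ G`. When `B = ∅` the point `π⁻¹ q` may be far
from `q`; one then first builds `g ∈ G` with `g (q + 1) = q` and iterates it. -/

open Set

namespace IsTimedAutPerm

variable {π σ : Equiv.Perm ℝ}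

theorem one : IsTimedAutPerm 1 := ⟨strictMono_id, fun _ => rfl⟩

theorem mul (hπ : IsTimedAutPerm π) (hσ : IsTimedAutPerm σ) : IsTimedAutPerm (π * σ) :=
  ⟨hπ.1.comp hσ.1, fun t => by simp only [Equiv.Perm.mul_apply, hσ.2, hπ.2]⟩

theorem inv (hπ : IsTimedAutPerm π) : IsTimedAutPerm π⁻¹ := by
  refine ⟨fun s t hst => ?_, fun t => hπ.1.injective ?_⟩
  · rw [← hπ.1.lt_iff_lt]; simpa using hst
  · simp only [hπ.2, Equiv.Perm.coe_inv, Equiv.apply_symm_apply]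

theorem map_add_int (hπ : IsTimedAutPerm π) (t : ℝ) (k : ℤ) : π (t + k) = π t + k :=
  AddConstMapClass.map_add_int (AddConstMap.mk π hπ.2 : AddConstMap ℝ ℝ 1 1) t k

end IsTimedAutPerm

def timedAutGroup : Subgroup (Equiv.Perm ℝ) where
  carrier := {π | IsTimedAutPerm π}
  one_mem' := IsTimedAutPerm.one
  mul_mem' := IsTimedAutPerm.mul
  inv_mem' := IsTimedAutPerm.inv

def timedAutFixingSubgroup (S : Set ℝ) : Subgroup (Equiv.Perm ℝ) :=
  timedAutGroup ⊓ fixingSubgroup (Equiv.Perm ℝ) S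

section timedAutFixingSubgroup

variable {S : Set ℝ} {π : Equiv.Perm ℝ}

theorem mem_timedAutFixingSubgroup : π ∈ timedAutFixingSubgroup S ↔ π ∈ TimedAutFixing S := by
  simp [timedAutFixingSubgroup, timedAutGroup, TimedAutFixing, mem_fixingSubgroup_iff,
    Equiv.Perm.smul_def]

theorem coe_timedAutFixingSubgroup (S : Set ℝ) :
    (timedAutFixingSubgroup S : Set (Equiv.Perm ℝ)) = TimedAutFixing S :=
  Set.ext fun _ => mem_timedAutFixingSubgroup

theorem mem_timedAutFixingSubgroup_insert {a : ℝ} :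
    π ∈ timedAutFixingSubgroup (insert a S) ↔ π ∈ timedAutFixingSubgroup S ∧ π a = a := by
  simp only [mem_timedAutFixingSubgroup, TimedAutFixing, mem_ofPred_eq, forall_mem_insert]
  tauto

theorem timedAutFixingSubgroup_antitone : Antitone timedAutFixingSubgroup :=
  fun _ _ h => inf_le_inf_left _ (fixingSubgroup_antitone _ _ h)

end timedAutFixingSubgroup

def intTranslates (S : Set ℝ) : Set ℝ := {x | ∃ c ∈ S, ∃ k : ℤ, x = c + k}

section intTranslates

variable {S : Set ℝ}

theorem subset_intTranslates : S ⊆ intTranslates S :=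
  fun c hc => ⟨c, hc, 0, by simp⟩

theorem add_int_mem_intTranslates {x : ℝ} (hx : x ∈ intTranslates S) (k : ℤ) :
    x + k ∈ intTranslates S := by
  obtain ⟨c, hc, j, rfl⟩ := hx
  exact ⟨c, hc, j + k, by push_cast; ring⟩

theorem intTranslates_insert (a : ℝ) (S : Set ℝ) :
    intTranslates (insert a S) = intTranslates {a} ∪ intTranslates S := by
  ext x
  simp [intTranslates]

theorem intTranslates_empty : intTranslates ∅ = ∅ := by
  simp [intTranslates]

theorem eq_of_mem_intTranslates_singleton {c y y' : ℝ} (hy : y ∈ intTranslates {c})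
    (hy' : y' ∈ intTranslates {c}) (h : |y - y'| < 1) : y = y' := by
  obtain ⟨_, rfl, k, rfl⟩ := hy
  obtain ⟨_, rfl, k', rfl⟩ := hy'
  have : |((k - k' : ℤ) : ℝ)| < 1 := by push_cast; rwa [add_sub_add_left_eq_sub] at h
  rw [← Int.cast_abs, ← Int.cast_one, Int.cast_lt, Int.abs_lt_one_iff, sub_eq_zero] at this
  rw [this]

theorem disjoint_intTranslates_singleton {c q : ℝ} (hc : c ∈ intTranslates {q}) {s : Set ℝ}
    (hs : s ⊆ Ioo (c - 1) (c + 1) \ {c}) : Disjoint s (intTranslates {q}) := by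
  refine Set.disjoint_left.2 fun y hy hyq => (hs hy).2 ?_
  have hy₁ := (hs hy).1
  exact eq_of_mem_intTranslates_singleton hyq hc
    (abs_sub_lt_iff.2 ⟨by linarith [hy₁.2], by linarith [hy₁.1]⟩)

theorem mem_of_mem_intTranslates_of_subset_Ico (hS : S ⊆ Ico 0 1) {x : ℝ}
    (hx : x ∈ intTranslates S) (hx₁ : x ∈ Ico 0 1) : x ∈ S := by
  obtain ⟨c, hc, k, rfl⟩ := hx
  have hc₁ := hS hc
  rwa [eq_of_mem_intTranslates_singleton ⟨c, rfl, k, rfl⟩ (subset_intTranslates rfl)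
    (abs_sub_lt_iff.2 ⟨by linarith [hx₁.2, hc₁.1], by linarith [hx₁.1, hc₁.2]⟩)]

theorem not_disjoint_uIcc_intTranslates {c : ℝ} (hc : c ∈ S) {x y : ℝ} (h : 1 ≤ |x - y|) :
    ¬Disjoint (uIcc x y) (intTranslates S) := by
  have hlen : min x y + 1 ≤ max x y := by rw [← abs_sub_comm, ← max_sub_min_eq_abs] at h; linarith
  have h₁ := Int.le_ceil (min x y - c)
  have h₂ := Int.ceil_lt_add_one (min x y - c)
  rw [← Icc_min_max]
  exact not_disjoint_iff.2 ⟨c + ⌈min x y - c⌉, ⟨by linarith, by linarith⟩, c, hc, _, rfl⟩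

theorem exists_gap_intTranslates (hS : S.Finite) (hne : S.Nonempty) {u : ℝ}
    (hu : u ∉ intTranslates S) :
    ∃ a ∈ intTranslates S, ∃ b ∈ intTranslates S,
      a < u ∧ u < b ∧ b ≤ a + 1 ∧ Disjoint (Ioo a b) (intTranslates S) := by
  -- `above c` is the least translate of `c` that is `≥ u`
  set above : ℝ → ℝ := fun c => c + ⌈u - c⌉
  obtain ⟨c₁, hc₁, hmax⟩ := exists_max_image S above hS hne
  obtain ⟨c₂, hc₂, hmin⟩ := exists_min_image S above hS hne
  have hle (c : ℝ) : u ≤ above c := by have := Int.le_ceil (u - c); simp only [above]; linarith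
  have hlt (c : ℝ) : above c < u + 1 := by
    have := Int.ceil_lt_add_one (u - c); simp only [above]; linarith
  refine ⟨above c₁ - 1, ⟨c₁, hc₁, ⌈u - c₁⌉ - 1, by push_cast; ring⟩, above c₂,
    ⟨c₂, hc₂, ⌈u - c₂⌉, rfl⟩, by linarith [hlt c₁],
    (hle c₂).lt_of_ne fun h => hu ⟨c₂, hc₂, _, h⟩, by linarith [hmin c₁ hc₁], ?_⟩
  rw [Set.disjoint_left]
  rintro _ ⟨ha, hb⟩ ⟨c, hc, k, rfl⟩
  rcases lt_or_ge k ⌈u - c⌉ with hk | hk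
  · have : (k : ℝ) ≤ ⌈u - c⌉ - 1 := by exact_mod_cast Int.le_sub_one_of_lt hk
    linarith [hmax c hc]
  · have : (⌈u - c⌉ : ℝ) ≤ k := by exact_mod_cast hk
    linarith [hmin c hc]

theorem apply_eq_self_of_mem_intTranslates {π : Equiv.Perm ℝ} (hπ : π ∈ timedAutFixingSubgroup S)
    {y : ℝ} (hy : y ∈ intTranslates S) : π y = y := by
  obtain ⟨hπ, hfix⟩ := mem_timedAutFixingSubgroup.1 hπ
  obtain ⟨c, hc, k, rfl⟩ := hy
  rw [hπ.map_add_int, hfix c hc]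

theorem disjoint_uIcc_apply_intTranslates {π : Equiv.Perm ℝ}
    (hπ : π ∈ timedAutFixingSubgroup S) {x : ℝ} (hx : x ∉ intTranslates S) :
    Disjoint (uIcc x (π x)) (intTranslates S) := by
  have hmono := (mem_timedAutFixingSubgroup.1 hπ).1.1
  refine Set.disjoint_left.2 fun y hy hyS => hx ?_
  have hπy := apply_eq_self_of_mem_intTranslates hπ hyS
  -- `π` fixes `y`, so `y` cannot lie strictly between `x` and `π x`
  suffices y = x from this ▸ hyS
  rcases mem_uIcc.1 hy with ⟨hxy, hyx⟩ | ⟨hyx, hxy⟩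
  · rw [← hπy, hmono.le_iff_le] at hyx; exact le_antisymm hyx hxy
  · rw [← hπy, hmono.le_iff_le] at hyx; exact le_antisymm hxy hyx

end intTranslates

noncomputable def fracLinear (ℓ c t : ℝ) : ℝ := ℓ * t / (t + c * (ℓ - t))

section fracLinear

variable {ℓ c : ℝ}

theorem fracLinear_denom_pos (hℓ : 0 < ℓ) (hc : 0 < c) {t : ℝ} (ht : t ∈ Icc 0 ℓ) :
    0 < t + c * (ℓ - t) := by
  rcases ht.1.eq_or_lt with rfl | ht0
  · simpa using mul_pos hc hℓ
  · nlinarith [ht.2]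

theorem fracLinear_lt_fracLinear (hℓ : 0 < ℓ) (hc : 0 < c) {s t : ℝ} (hs : s ∈ Icc 0 ℓ)
    (ht : t ∈ Icc 0 ℓ) (hst : s < t) : fracLinear ℓ c s < fracLinear ℓ c t := by
  unfold fracLinear
  rw [div_lt_div_iff₀ (fracLinear_denom_pos hℓ hc hs) (fracLinear_denom_pos hℓ hc ht)]
  -- both sides differ by `c ℓ² (t - s)`
  nlinarith [mul_pos (mul_pos hc (mul_pos hℓ hℓ)) (sub_pos.2 hst)]

theorem fracLinear_mem_Icc (hℓ : 0 < ℓ) (hc : 0 < c) {t : ℝ} (ht : t ∈ Icc 0 ℓ) :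
    fracLinear ℓ c t ∈ Icc 0 ℓ := by
  have hd := fracLinear_denom_pos hℓ hc ht
  unfold fracLinear
  constructor
  · exact div_nonneg (mul_nonneg hℓ.le ht.1) hd.le
  · rw [div_le_iff₀ hd]
    nlinarith [mul_nonneg (mul_nonneg hℓ.le hc.le) (sub_nonneg.2 ht.2)]

theorem fracLinear_inv_fracLinear (hℓ : 0 < ℓ) (hc : 0 < c) {t : ℝ} (ht : t ∈ Icc 0 ℓ) :
    fracLinear ℓ c⁻¹ (fracLinear ℓ c t) = t := by
  have hd := (fracLinear_denom_pos hℓ hc ht).ne'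
  have := hℓ.ne'; have := hc.ne'
  unfold fracLinear
  have hden : ℓ * t / (t + c * (ℓ - t)) + c⁻¹ * (ℓ - ℓ * t / (t + c * (ℓ - t))) =
      ℓ ^ 2 / (t + c * (ℓ - t)) := by
    field_simp
    ring
  rw [hden]
  field_simp

theorem fracLinear_zero : fracLinear ℓ c 0 = 0 := by simp [fracLinear]

theorem fracLinear_self (hℓ : 0 < ℓ) : fracLinear ℓ c ℓ = ℓ := by
  simp [fracLinear, hℓ.ne']

theorem fracLinear_apply_eq {u w : ℝ} (hu : u ∈ Ioo 0 ℓ) (hw : w ∈ Ioo 0 ℓ) :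
    fracLinear ℓ (u * (ℓ - w) / (w * (ℓ - u))) u = w := by
  have := hu.1; have := hu.2; have := hw.1; have := hw.2
  unfold fracLinear
  field_simp
  ring

end fracLinear

noncomputable def periodicLift (h : ℝ → ℝ) (t : ℝ) : ℝ := ⌊t⌋ + h (Int.fract t)

section periodicLift

variable {h h' : ℝ → ℝ}

theorem periodicLift_add_one (t : ℝ) : periodicLift h (t + 1) = periodicLift h t + 1 := by
  simp only [periodicLift, Int.floor_add_one, Int.fract_add_one, Int.cast_add, Int.cast_one]
  ring

theorem periodicLift_of_mem_Ico {t : ℝ} (ht : t ∈ Ico 0 1) : periodicLift h t = h t := by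
  rw [periodicLift, Int.floor_eq_zero_iff.2 ht, Int.fract_eq_self.2 ht, Int.cast_zero, zero_add]

theorem periodicLift_eq_self {t : ℝ} (ht : h (Int.fract t) = Int.fract t) :
    periodicLift h t = t := by
  rw [periodicLift, ht, Int.floor_add_fract]

theorem floor_periodicLift (hmaps : MapsTo h (Ico 0 1) (Ico 0 1)) (t : ℝ) :
    ⌊periodicLift h t⌋ = ⌊t⌋ := by
  rw [periodicLift, Int.floor_intCast_add,
    Int.floor_eq_zero_iff.2 (hmaps ⟨Int.fract_nonneg t, Int.fract_lt_one t⟩), add_zero]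

theorem fract_periodicLift (hmaps : MapsTo h (Ico 0 1) (Ico 0 1)) (t : ℝ) :
    Int.fract (periodicLift h t) = h (Int.fract t) := by
  rw [periodicLift, Int.fract_intCast_add,
    Int.fract_eq_self.2 (hmaps ⟨Int.fract_nonneg t, Int.fract_lt_one t⟩)]

theorem periodicLift_periodicLift (hmaps : MapsTo h (Ico 0 1) (Ico 0 1))
    (hinv : LeftInvOn h' h (Ico 0 1)) (t : ℝ) : periodicLift h' (periodicLift h t) = t := by
  rw [periodicLift, floor_periodicLift hmaps, fract_periodicLift hmaps,
    hinv ⟨Int.fract_nonneg t, Int.fract_lt_one t⟩, Int.floor_add_fract]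

theorem strictMono_periodicLift (hmaps : MapsTo h (Ico 0 1) (Ico 0 1))
    (hmono : StrictMonoOn h (Ico 0 1)) : StrictMono (periodicLift h) := by
  intro s t hst
  have hs : Int.fract s ∈ Ico 0 1 := ⟨Int.fract_nonneg s, Int.fract_lt_one s⟩
  have ht : Int.fract t ∈ Ico 0 1 := ⟨Int.fract_nonneg t, Int.fract_lt_one t⟩
  rcases (Int.floor_mono hst.le).eq_or_lt with hfl | hfl
  · have : Int.fract s < Int.fract t := by
      rw [← Int.self_sub_floor, ← Int.self_sub_floor, hfl]; linarith
    rw [periodicLift, periodicLift, hfl]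
    exact add_lt_add_right (hmono hs ht this) _
  · have : (⌊s⌋ : ℝ) + 1 ≤ ⌊t⌋ := by exact_mod_cast hfl
    rw [periodicLift, periodicLift]
    linarith [(hmaps hs).2, (hmaps ht).1]

theorem exists_timedAut_eq_periodicLift (hmaps : MapsTo h (Ico 0 1) (Ico 0 1))
    (hmaps' : MapsTo h' (Ico 0 1) (Ico 0 1)) (hinv : InvOn h' h (Ico 0 1) (Ico 0 1))
    (hmono : StrictMonoOn h (Ico 0 1)) (a : ℝ) :
    ∃ π : Equiv.Perm ℝ, IsTimedAutPerm π ∧ ∀ x, π x = periodicLift h (x - a) + a := by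
  let L : Equiv.Perm ℝ := ⟨periodicLift h, periodicLift h',
    periodicLift_periodicLift hmaps hinv.1, periodicLift_periodicLift hmaps' hinv.2⟩
  refine ⟨(Equiv.subRight a).trans (L.trans (Equiv.addRight a)), ⟨fun s t hst => ?_, fun t => ?_⟩,
    fun _ => rfl⟩
  · change periodicLift h (s - a) + a < periodicLift h (t - a) + a
    exact add_lt_add_left (strictMono_periodicLift hmaps hmono (sub_lt_sub_right hst a)) a
  · change periodicLift h (t + 1 - a) + a = periodicLift h (t - a) + a + 1
    rw [add_sub_right_comm, periodicLift_add_one]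
    ring

end periodicLift

noncomputable def gapMap (ℓ c t : ℝ) : ℝ := if t ≤ ℓ then fracLinear ℓ c t else t

section gapMap

variable {ℓ c t : ℝ}

theorem gapMap_of_le (ht : t ≤ ℓ) : gapMap ℓ c t = fracLinear ℓ c t := if_pos ht

theorem gapMap_of_ge (hℓ : 0 < ℓ) (ht : ℓ ≤ t) : gapMap ℓ c t = t := by
  rcases ht.eq_or_lt with rfl | ht
  · rw [gapMap_of_le le_rfl, fracLinear_self hℓ]
  · exact if_neg ht.not_ge

theorem gapMap_eq_self (hℓ : 0 < ℓ) (ht₀ : 0 ≤ t) (ht : t ∉ Ioo 0 ℓ) : gapMap ℓ c t = t := by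
  rcases ht₀.eq_or_lt with rfl | ht₀
  · rw [gapMap_of_le hℓ.le, fracLinear_zero]
  · exact gapMap_of_ge hℓ (not_lt.1 fun h => ht ⟨ht₀, h⟩)

variable (hℓ : 0 < ℓ) (hc : 0 < c)
include hℓ hc

theorem strictMonoOn_gapMap : StrictMonoOn (gapMap ℓ c) (Ici 0) := by
  have hleft : StrictMonoOn (gapMap ℓ c) (Icc 0 ℓ) := fun s hs t ht hst => by
    rw [gapMap_of_le hs.2, gapMap_of_le ht.2]
    exact fracLinear_lt_fracLinear hℓ hc hs ht hst
  have hright : StrictMonoOn (gapMap ℓ c) (Ici ℓ) := fun s hs t ht hst => by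
    rwa [gapMap_of_ge hℓ hs, gapMap_of_ge hℓ ht]
  simpa [Icc_union_Ici_eq_Ici hℓ.le] using
    hleft.union hright (isGreatest_Icc hℓ.le) isLeast_Ici

theorem mapsTo_gapMap (hℓ₁ : ℓ ≤ 1) : MapsTo (gapMap ℓ c) (Ico 0 1) (Ico 0 1) := by
  intro t ht
  have hmono := strictMonoOn_gapMap hℓ hc
  have h0 : gapMap ℓ c 0 = 0 := gapMap_eq_self hℓ le_rfl fun h => h.1.false
  have h1 : gapMap ℓ c 1 = 1 := gapMap_of_ge hℓ hℓ₁
  exact ⟨h0 ▸ hmono.monotoneOn (mem_Ici.2 le_rfl) ht.1 ht.1,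
    h1 ▸ hmono ht.1 (mem_Ici.2 zero_le_one) ht.2⟩

theorem leftInvOn_gapMap : LeftInvOn (gapMap ℓ c⁻¹) (gapMap ℓ c) (Ici 0) := by
  intro t ht
  rcases le_total t ℓ with htℓ | htℓ
  · have hmem : t ∈ Icc 0 ℓ := ⟨ht, htℓ⟩
    rw [gapMap_of_le htℓ, gapMap_of_le (fracLinear_mem_Icc hℓ hc hmem).2,
      fracLinear_inv_fracLinear hℓ hc hmem]
  · rw [gapMap_of_ge hℓ htℓ, gapMap_of_ge hℓ htℓ]

end gapMap

theorem exists_timedAut_apply_eq_of_mem_gap {a b u w : ℝ} (hu : u ∈ Ioo a b) (hw : w ∈ Ioo a b)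
    (hba : b ≤ a + 1) :
    ∃ π : Equiv.Perm ℝ, IsTimedAutPerm π ∧ π u = w ∧
      ∀ y : ℝ, (∀ k : ℤ, y + k ∉ Ioo a b) → π y = y := by
  obtain ⟨hau, hub⟩ := hu
  obtain ⟨haw, hwb⟩ := hw
  obtain ⟨ℓ, rfl⟩ : ∃ ℓ, b = a + ℓ := ⟨b - a, by ring⟩
  have hℓ : 0 < ℓ := by linarith
  have hℓ₁ : ℓ ≤ 1 := by linarith
  set c := (u - a) * (ℓ - (w - a)) / ((w - a) * (ℓ - (u - a)))
  have hc : 0 < c :=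
    div_pos (mul_pos (by linarith) (by linarith)) (mul_pos (by linarith) (by linarith))
  have hIco : Ico (0 : ℝ) 1 ⊆ Ici 0 := Ico_subset_Ici_self
  have hinv : InvOn (gapMap ℓ c⁻¹) (gapMap ℓ c) (Ico 0 1) (Ico 0 1) :=
    ⟨(leftInvOn_gapMap hℓ hc).mono hIco,
      by simpa using (leftInvOn_gapMap hℓ (inv_pos.2 hc)).mono hIco⟩
  obtain ⟨π, hπ, hπx⟩ := exists_timedAut_eq_periodicLift (mapsTo_gapMap hℓ hc hℓ₁)
    (mapsTo_gapMap hℓ (inv_pos.2 hc) hℓ₁) hinv ((strictMonoOn_gapMap hℓ hc).mono hIco) a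
  refine ⟨π, hπ, ?_, fun y hy => ?_⟩
  · rw [hπx, periodicLift_of_mem_Ico ⟨by linarith, by linarith⟩,
      gapMap_of_le (by linarith), fracLinear_apply_eq ⟨by linarith, by linarith⟩
        ⟨by linarith, by linarith⟩]
    ring
  · have hfract : Int.fract (y - a) ∉ Ioo 0 ℓ := fun h => hy (-⌊y - a⌋) (by
      rw [← Int.self_sub_floor] at h
      push_cast
      constructor <;> linarith [h.1, h.2])
    rw [hπx, periodicLift_eq_self (gapMap_eq_self hℓ (Int.fract_nonneg _) hfract)]
    ring

theorem exists_mem_timedAutFixingSubgroup_apply_eq {S : Set ℝ} (hS : S.Finite)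
    (hne : S.Nonempty) {u w : ℝ} (huw : Disjoint (uIcc u w) (intTranslates S)) :
    ∃ π ∈ timedAutFixingSubgroup S, π u = w := by
  have hu : u ∉ intTranslates S := Set.disjoint_left.1 huw left_mem_uIcc
  obtain ⟨a, ha, b, hb, hau, hub, hba, hgap⟩ := exists_gap_intTranslates hS hne hu
  have haw : a < w := not_le.1 fun h =>
    Set.disjoint_left.1 huw (mem_uIcc.2 (Or.inr ⟨h, hau.le⟩)) ha
  have hwb : w < b := not_le.1 fun h =>
    Set.disjoint_left.1 huw (mem_uIcc.2 (Or.inl ⟨hub.le, h⟩)) hb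
  obtain ⟨π, hπ, hπu, hfix⟩ := exists_timedAut_apply_eq_of_mem_gap ⟨hau, hub⟩ ⟨haw, hwb⟩ hba
  refine ⟨π, mem_timedAutFixingSubgroup.2 ⟨hπ, fun t ht => hfix t fun k hk => ?_⟩, hπu⟩
  exact Set.disjoint_left.1 hgap hk (add_int_mem_intTranslates (subset_intTranslates ht) k)

section near

variable {G : Subgroup (Equiv.Perm ℝ)} {B : Set ℝ} {p q : ℝ}
  (hB : B.Finite) (hqB : q ∉ intTranslates B) (hpq : q ∉ intTranslates {p})
  (hGp : timedAutFixingSubgroup (insert p B) ≤ G)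
  (hGq : timedAutFixingSubgroup (insert q B) ≤ G)
include hB hqB hpq hGp hGq

theorem exists_mem_apply_eq_of_abs_sub_lt_one {x : ℝ}
    (hx : Disjoint (uIcc x q) (intTranslates B)) (hxq : |x - q| < 1) :
    ∃ g ∈ G ⊓ timedAutFixingSubgroup B, g x = q := by
  rcases eq_or_ne x q with rfl | hne
  · exact ⟨1, one_mem _, rfl⟩
  have hqpB : q ∉ intTranslates (insert p B) := by
    rw [intTranslates_insert]; exact fun h => h.elim hpq hqB
  obtain ⟨a, -, b, -, haq, hqb, -, hgap⟩ :=
    exists_gap_intTranslates (hB.insert p) (insert_nonempty p B) hqpB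
  -- go from `x` to a point `z` strictly between `x` and `q` fixing `q`, then from `z` to `q`
  -- fixing `p`, which is possible since no translate of `p` separates `z` from `q`
  obtain ⟨z, hz₁, hz₂⟩ : ∃ z, max a (min x q) < z ∧ z < min b (max x q) := exists_between <|
    max_lt (lt_min (haq.trans hqb) (lt_max_of_lt_right haq))
      (lt_min (min_lt_of_right_lt hqb) (min_lt_max.2 hne))
  simp only [max_lt_iff, lt_min_iff] at hz₁ hz₂
  have hzxq : z ∈ uIcc x q := Ioo_subset_Icc_self ⟨hz₁.2, hz₂.2⟩
  have hxzq : uIcc x z ⊆ Ioo (q - 1) (q + 1) \ {q} := by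
    rw [abs_sub_lt_iff] at hxq
    rcases hne.lt_or_gt with h | h
    · simp only [min_eq_left h.le, max_eq_right h.le] at hz₁ hz₂
      rw [uIcc_of_le hz₁.2.le]
      exact fun y hy => ⟨⟨by linarith [hy.1], by linarith [hy.2]⟩, (by linarith [hy.2] : y < q).ne⟩
    · simp only [min_eq_right h.le, max_eq_left h.le] at hz₁ hz₂
      rw [uIcc_of_ge hz₂.2.le]
      exact fun y hy => ⟨⟨by linarith [hy.1], by linarith [hy.2]⟩, (by linarith [hy.1] : q < y).ne'⟩
  have hxz : Disjoint (uIcc x z) (intTranslates (insert q B)) := by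
    rw [intTranslates_insert, disjoint_union_right]
    exact ⟨disjoint_intTranslates_singleton (subset_intTranslates rfl) hxzq,
      hx.mono_left (uIcc_subset_uIcc_left hzxq)⟩
  obtain ⟨σ, hσ, hσx⟩ :=
    exists_mem_timedAutFixingSubgroup_apply_eq (hB.insert q) (insert_nonempty q B) hxz
  obtain ⟨τ, hτ, hτz⟩ := exists_mem_timedAutFixingSubgroup_apply_eq (hB.insert p)
    (insert_nonempty p B) (hgap.mono_left (ordConnected_Ioo.uIcc_subset ⟨hz₁.1, hz₂.1⟩ ⟨haq, hqb⟩))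
  have hanti (r : ℝ) := timedAutFixingSubgroup_antitone (subset_insert r B)
  exact ⟨τ * σ, ⟨G.mul_mem (hGp hτ) (hGq hσ), mul_mem (hanti p hτ) (hanti q hσ)⟩,
    by rw [Equiv.Perm.mul_apply, hσx, hτz]⟩

end near

section emptyBase

variable {G : Subgroup (Equiv.Perm ℝ)} {p q : ℝ} (hpq : q ∉ intTranslates {p})
  (hGp : timedAutFixingSubgroup {p} ≤ G) (hGq : timedAutFixingSubgroup {q} ≤ G)
include hpq hGp hGq

theorem exists_mem_apply_add_one_eq : ∃ g ∈ G ⊓ timedAutFixingSubgroup ∅, g (q + 1) = q := by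
  have hnear {x : ℝ} (hx : |x - q| < 1) : ∃ g ∈ G ⊓ timedAutFixingSubgroup ∅, g x = q :=
    exists_mem_apply_eq_of_abs_sub_lt_one finite_empty (by simp [intTranslates_empty]) hpq
      (by rwa [insert_empty_eq]) (by rwa [insert_empty_eq]) (by simp [intTranslates_empty]) hx
  -- `q + 1` can be pushed below the translate `p'` of `p` lying in `(q, q + 1)`
  set p' := p + ⌈q - p⌉
  have hp' : p' ∈ intTranslates {p} := ⟨p, rfl, _, rfl⟩
  have hqp' : q < p' := (by linarith [Int.le_ceil (q - p)] : q ≤ p').lt_of_ne fun h => hpq (h ▸ hp')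
  have hp'q : p' < q + 1 := by linarith [Int.ceil_lt_add_one (q - p)]
  obtain ⟨y, hp'y, hyq⟩ := exists_between hp'q
  obtain ⟨σ, hσ, hσy⟩ := exists_mem_timedAutFixingSubgroup_apply_eq (finite_singleton p)
    (singleton_nonempty p) (u := q + 1) (w := y) <| by
      rw [uIcc_of_ge hyq.le]
      exact disjoint_intTranslates_singleton hp' fun z hz =>
        ⟨⟨by linarith [hz.1], by linarith [hz.2]⟩, (by linarith [hz.1] : p' < z).ne'⟩
  obtain ⟨g, hg, hgy⟩ := hnear (x := y) (abs_lt.2 ⟨by linarith, by linarith⟩)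
  exact ⟨g * σ, mul_mem hg ⟨hGp hσ, timedAutFixingSubgroup_antitone (empty_subset _) hσ⟩,
    by rw [Equiv.Perm.mul_apply, hσy, hgy]⟩

theorem exists_mem_apply_add_int_eq (n : ℤ) :
    ∃ g ∈ G ⊓ timedAutFixingSubgroup ∅, g (q + n) = q := by
  obtain ⟨g₁, hg₁, hg₁q⟩ := exists_mem_apply_add_one_eq hpq hGp hGq
  have hshift (m : ℤ) : g₁ (q + (m + 1 : ℤ)) = q + m := by
    rw [show q + ((m + 1 : ℤ) : ℝ) = q + 1 + m by push_cast; ring,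
      (mem_timedAutFixingSubgroup.1 hg₁.2).1.map_add_int, hg₁q]
  induction n using Int.induction_on with
  | zero => exact ⟨1, one_mem _, by simp⟩
  | succ m ih =>
    obtain ⟨g, hg, hgq⟩ := ih
    exact ⟨g * g₁, mul_mem hg hg₁, by rw [Equiv.Perm.mul_apply, hshift, hgq]⟩
  | pred m ih =>
    obtain ⟨g, hg, hgq⟩ := ih
    refine ⟨g * g₁⁻¹, mul_mem hg (inv_mem hg₁), ?_⟩
    have := hshift (-m - 1)
    rw [Equiv.Perm.mul_apply, Equiv.Perm.inv_eq_iff_eq.2 this.symm]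
    simpa using hgq

end emptyBase

section removePoint

variable {G : Subgroup (Equiv.Perm ℝ)} {B : Set ℝ} {p q : ℝ}
  (hB : B.Finite) (hqB : q ∉ intTranslates B) (hpq : q ∉ intTranslates {p})
  (hGp : timedAutFixingSubgroup (insert p B) ≤ G)
  (hGq : timedAutFixingSubgroup (insert q B) ≤ G)
include hB hqB hpq hGp hGq

theorem exists_mem_apply_eq {x : ℝ} (hx : Disjoint (uIcc x q) (intTranslates B)) :
    ∃ g ∈ G ⊓ timedAutFixingSubgroup B, g x = q := by
  by_cases hxq : |x - q| < 1
  · exact exists_mem_apply_eq_of_abs_sub_lt_one hB hqB hpq hGp hGq hx hxq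
  obtain rfl : B = ∅ := eq_empty_of_forall_notMem fun c hc =>
    not_disjoint_uIcc_intTranslates hc (not_lt.1 hxq) hx
  have hxn : |x - ⌊x - q⌋ - q| < 1 := by
    rw [sub_right_comm, Int.self_sub_floor, abs_lt]
    exact ⟨by linarith [Int.fract_nonneg (x - q)], Int.fract_lt_one _⟩
  obtain ⟨h, hh, hhx⟩ := exists_mem_apply_eq_of_abs_sub_lt_one hB hqB hpq hGp hGq
    (by simp [intTranslates_empty]) hxn
  rw [insert_empty_eq] at hGp hGq
  obtain ⟨g, hg, hgq⟩ := exists_mem_apply_add_int_eq hpq hGp hGq ⌊x - q⌋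
  have hhx' : h x = q + ⌊x - q⌋ := by
    simpa [hhx] using (mem_timedAutFixingSubgroup.1 hh.2).1.map_add_int (x - ⌊x - q⌋) ⌊x - q⌋
  exact ⟨g * h, mul_mem hg hh, by rw [Equiv.Perm.mul_apply, hhx', hgq]⟩

theorem timedAutFixingSubgroup_le_of_insert_le : timedAutFixingSubgroup B ≤ G := by
  intro π hπ
  obtain ⟨g, ⟨hgG, hgB⟩, hgx⟩ := exists_mem_apply_eq hB hqB hpq hGp hGq
    (uIcc_comm q _ ▸ disjoint_uIcc_apply_intTranslates (inv_mem hπ) hqB)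
  have hg : π * g⁻¹ ∈ timedAutFixingSubgroup (insert q B) := by
    refine mem_timedAutFixingSubgroup_insert.2 ⟨mul_mem hπ (inv_mem hgB), ?_⟩
    rw [Equiv.Perm.mul_apply, Equiv.Perm.inv_eq_iff_eq.2 hgx.symm]
    simp
  simpa using G.mul_mem (hGq hg) hgG

end removePoint

theorem timedAutFixingSubgroup_le_of_insert_le_of_union_le {G : Subgroup (Equiv.Perm ℝ)}
    {C Q : Set ℝ} {p : ℝ} (hC : C.Finite) (hQ : Q.Finite) (hsub : insert p (C ∪ Q) ⊆ Ico 0 1)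
    (hpQ : p ∉ Q) (hCQ : Disjoint C Q) (hGp : timedAutFixingSubgroup (insert p C) ≤ G)
    (hGQ : timedAutFixingSubgroup (C ∪ Q) ≤ G) : timedAutFixingSubgroup C ≤ G := by
  induction Q, hQ using Set.Finite.induction_on generalizing C with
  | empty => simpa using hGQ
  | @insert q Q hqQ _ ih =>
    have hqC : q ∉ C := fun h => disjoint_left.1 hCQ h (mem_insert q Q)
    have hGq : timedAutFixingSubgroup (insert q C) ≤ G :=
      ih (hC.insert q) (by simpa [insert_union, union_insert] using hsub)
        (fun h => hpQ (mem_insert_of_mem q h))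
        (disjoint_insert_left.2 ⟨hqQ, hCQ.mono_right (subset_insert q Q)⟩)
        ((timedAutFixingSubgroup_antitone (insert_subset_insert (subset_insert q C))).trans hGp)
        (by simpa [insert_union, union_insert] using hGQ)
    have hp : p ∈ Ico (0 : ℝ) 1 := hsub (mem_insert p _)
    have hq : q ∈ Ico (0 : ℝ) 1 := hsub (by simp)
    have hqB : q ∉ intTranslates C := fun h =>
      hqC (mem_of_mem_intTranslates_of_subset_Ico (fun c hc => hsub (by simp [hc])) h hq)
    have hpq : q ∉ intTranslates {p} := fun h =>
      hpQ (mem_of_mem_intTranslates_of_subset_Ico (singleton_subset_iff.2 hp) h hq ▸ mem_insert q Q)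
    exact timedAutFixingSubgroup_le_of_insert_le hC hqB hpq hGp hGq

theorem timedAutFixingSubgroup_le_of_union_le {G : Subgroup (Equiv.Perm ℝ)} {C P Q : Set ℝ}
    (hC : C.Finite) (hP : P.Finite) (hQ : Q.Finite) (hsub : C ∪ P ∪ Q ⊆ Ico 0 1)
    (hCQ : Disjoint C Q) (hPQ : Disjoint P Q) (hGP : timedAutFixingSubgroup (C ∪ P) ≤ G)
    (hGQ : timedAutFixingSubgroup (C ∪ Q) ≤ G) : timedAutFixingSubgroup C ≤ G := by
  induction P, hP using Set.Finite.induction_on generalizing C with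
  | empty => simpa using hGP
  | @insert p P _ _ ih =>
    have hpQ : p ∉ Q := disjoint_left.1 hPQ (mem_insert p P)
    have hGp : timedAutFixingSubgroup (insert p C) ≤ G :=
      ih (hC.insert p) (by simpa [insert_union, union_insert] using hsub)
        (disjoint_insert_left.2 ⟨hpQ, hCQ⟩) (hPQ.mono_left (subset_insert p P))
        (by simpa [insert_union, union_insert] using hGP)
        ((timedAutFixingSubgroup_antitone
          (union_subset_union_left Q (subset_insert p C))).trans hGQ)
    refine timedAutFixingSubgroup_le_of_insert_le_of_union_le hC hQ ?_ hpQ hCQ hGp hGQ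
    exact (insert_subset_insert (union_subset_union_left Q subset_union_left)).trans
      (by simpa [insert_union, union_insert] using hsub)

theorem timedAutFixing_inter_subset_subgroup_general
    (F F' : Set ℝ) (hF : F.Finite) (hF' : F'.Finite)
    (hFsub : F ⊆ Set.Ico (0 : ℝ) 1) (hF'sub : F' ⊆ Set.Ico (0 : ℝ) 1)
    (G : Subgroup (Equiv.Perm ℝ))
    (hFG : TimedAutFixing F ⊆ ↑G) (hF'G : TimedAutFixing F' ⊆ ↑G) :
    TimedAutFixing (F ∩ F') ⊆ ↑G := by
  simp only [← coe_timedAutFixingSubgroup, SetLike.coe_subset_coe] at hFG hF'G ⊢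
  refine timedAutFixingSubgroup_le_of_union_le (P := F \ F') (Q := F' \ F) (hF.inter_of_left F')
    hF.sdiff hF'.sdiff ?_ (disjoint_sdiff_right.mono_left inter_subset_left) disjoint_sdiff_sdiff
    (by rwa [inter_union_sdiff]) (by rwa [inter_comm, inter_union_sdiff])
  exact union_subset (union_subset (inter_subset_left.trans hFsub) (sdiff_subset.trans hFsub))
    (sdiff_subset.trans hF'sub)

/-- let `F, F' ⊆ [0,1)` be finite and let `G` be a subgroup of
the group `Π` of timed automorphisms. If `Π_F ⊆ G` and `Π_{F'} ⊆ G` then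
`Π_{F ∩ F'} ⊆ G`. -/
theorem timedAutFixing_inter_subset_subgroup
    (F F' : Set ℝ) (hF : F.Finite) (hF' : F'.Finite)
    (hFsub : F ⊆ Set.Ico (0 : ℝ) 1) (hF'sub : F' ⊆ Set.Ico (0 : ℝ) 1)
    (G : Subgroup (Equiv.Perm ℝ)) (hGTA : ∀ π ∈ G, IsTimedAutPerm π)
    (hFG : TimedAutFixing F ⊆ ↑G) (hF'G : TimedAutFixing F' ⊆ ↑G) :
    TimedAutFixing (F ∩ F') ⊆ ↑G :=
  timedAutFixing_inter_subset_subgroup_general F F' hF hF' hFsub hF'sub G hFG hF'G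
end
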